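/- Robustness property of DRL: Let (Ω, F, P) be a probability space, H a real Hilbert space, θ* ∈ H, ε ≥ 0, α ∈ (0, 1/2), β* ∈ (0, α), and γ with 0 ≤ γ < (α − β*)/(1 − β*). Let θ̂_1, …, θ̂_k : Ω → H be independent random variables, and suppose there is a subset J ⊆ {1, …, k} with |J| ≥ (1 − γ)·k such that P(‖θ̂_j − θ*‖ > ε) ≤ β* for every j ∈ J (the random variables with indices outside J are arbitrary). Let θ̃ : Ω → H be any random variable such that for every ω ∈ Ω, θ̃(ω) is a geometric median of θ̂_1(ω), …, θ̂_k(ω). Then P(‖θ̃ − θ*‖ ≤ C_α · ε) ≥ 1 − exp(−k·(1 − γ)·ψ((α − γ)/(1 − γ), β*)). -/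

import Mathlib

/-!
If at most a fraction `α < 1/2` of the points `θ j` lie farther than `ε` from `z`, a geometric
median `m` lies within `C_α ε` of `z` (Minsker): were `d = ‖m - z‖` larger, moving `m` towards `z`
would decrease `∑ j, ‖m - θ j‖` to first order, because each of the at least `(1 - α) k` close
points is seen from `m` under an angle with cosine at least `√(d² - ε²) / d`, while each far point
costs at most the distance moved.

The number of far estimates among the machines in `J` is a sum of independent Bernoulli variables
of mean at most `β*`; by the Chernoff bound at the optimal exponential tilt it stays below `a |J|`,
`a = (α - γ)/(1 - γ)`, except with probability `exp (-|J| ψ(a, β*))`. As `|J| ≥ (1 - γ) k`, the far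
points then number less than `a |J| + (k - |J|) ≤ α k`.
-/

open scoped BigOperators
open MeasureTheory ProbabilityTheory

/-- A point `m` is a geometric median of the points `θ 1, …, θ k` if it minimizes
`y ↦ ∑ j, ‖y - θ j‖`. -/
def IsGeomMedian {H : Type*} [NormedAddCommGroup H] {k : ℕ} (θ : Fin k → H) (m : H) : Prop :=
  ∀ y : H, ∑ j, ‖m - θ j‖ ≤ ∑ j, ‖y - θ j‖

/-- The constant `C_α = (1 - α) √(1/(1 - 2α))`. -/
noncomputable def Cconst (α : ℝ) : ℝ := (1 - α) * Real.sqrt (1 / (1 - 2 * α))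

/-- `ψ(α, β) = (1 - α) log((1-α)/(1-β)) + α log(α/β)`. -/
noncomputable def psi (α β : ℝ) : ℝ :=
  (1 - α) * Real.log ((1 - α) / (1 - β)) + α * Real.log (α / β)

open Real Finset

section GeometricMedian

variable {H : Type*} [NormedAddCommGroup H] [InnerProductSpace ℝ H]

theorem hasDerivAt_norm_sub_smul {w : H} (hw : w ≠ 0) (u : H) :
    HasDerivAt (fun t : ℝ => ‖w - t • u‖) (-(inner ℝ w u / ‖w‖)) 0 := by
  have hline : HasDerivAt (fun t : ℝ => w - t • u) (-u) 0 := by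
    simpa using ((hasDerivAt_id (0 : ℝ)).smul_const u).const_sub w
  have hsqrt := hline.norm_sq.sqrt (by simpa using hw)
  simp only [sqrt_sq (norm_nonneg _), zero_smul, sub_zero, inner_neg_right] at hsqrt
  convert hsqrt using 1
  field_simp

theorem IsGeomMedian.sum_inner_div_norm_le {k : ℕ} {θ : Fin k → H} {m : H}
    (hm : IsGeomMedian θ m) (u : H) (S : Finset (Fin k)) (hS : ∀ j ∈ S, m - θ j ≠ 0) :
    ∑ j ∈ S, inner ℝ (m - θ j) u / ‖m - θ j‖ ≤ #Sᶜ * ‖u‖ := by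
  -- `G t - G 0` bounds the change of the objective along `t ↦ m - t • u` for `t > 0`
  set G : ℝ → ℝ := fun t => ∑ j ∈ S, ‖m - θ j - t • u‖ + t * (#Sᶜ * ‖u‖)
  have hG : HasDerivAt G (-∑ j ∈ S, inner ℝ (m - θ j) u / ‖m - θ j‖ + #Sᶜ * ‖u‖) 0 := by
    rw [← sum_neg_distrib]
    refine (HasDerivAt.fun_sum fun j hj => hasDerivAt_norm_sub_smul (hS j hj) u).add ?_
    simpa using (hasDerivAt_id (0 : ℝ)).mul_const (#Sᶜ * ‖u‖ : ℝ)
  have hmin : ∀ t > 0, G 0 ≤ G t := by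
    intro t ht
    have hfar : ∀ j ∈ Sᶜ, ‖m - θ j - t • u‖ ≤ ‖m - θ j‖ + t * ‖u‖ := fun j _ => by
      simpa [norm_smul, abs_of_pos ht] using norm_sub_le (m - θ j) (t • u)
    have hopt : ∑ j, ‖m - θ j‖ ≤ ∑ j, ‖m - θ j - t • u‖ := by
      simpa only [sub_right_comm _ (t • u)] using hm (m - t • u)
    rw [← sum_add_sum_compl S, ← sum_add_sum_compl S] at hopt
    have hfar_sum := sum_le_sum hfar
    rw [sum_add_distrib, sum_const, nsmul_eq_mul] at hfar_sum
    simp only [G, zero_smul, sub_zero, zero_mul, add_zero]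
    linarith
  have hslope := hG.tendsto_slope_zero_right
  have : 0 ≤ -∑ j ∈ S, inner ℝ (m - θ j) u / ‖m - θ j‖ + #Sᶜ * ‖u‖ := by
    refine ge_of_tendsto hslope ?_
    filter_upwards [self_mem_nhdsWithin] with t (ht : 0 < t)
    simpa using mul_nonneg (inv_nonneg.2 ht.le) (sub_nonneg.2 (hmin t ht))
  linarith

theorem sqrt_sq_sub_sq_mul_norm_sub_le_inner {v w : H} {r : ℝ} (hw : ‖w‖ ≤ r) (hr : r ≤ ‖v‖) :
    √(‖v‖ ^ 2 - r ^ 2) * ‖v - w‖ ≤ inner ℝ (v - w) v := by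
  have hinner : inner ℝ (v - w) v = ‖v‖ ^ 2 - inner ℝ w v := by
    rw [inner_sub_left, real_inner_self_eq_norm_sq]
  have hcs : inner ℝ w v ≤ r * ‖v‖ :=
    (real_inner_le_norm w v).trans (mul_le_mul_of_nonneg_right hw (norm_nonneg v))
  have hnonneg : 0 ≤ inner ℝ (v - w) v := by nlinarith [norm_nonneg w]
  -- `(‖v‖² - r²) ‖v - w‖² = (‖v‖² - ⟪w, v⟫)² + (‖w‖² - r²)(‖v‖² - r²) - (⟪w, v⟫ - r²)²`
  have hsq : (‖v‖ ^ 2 - r ^ 2) * ‖v - w‖ ^ 2 ≤ inner ℝ (v - w) v ^ 2 := by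
    rw [hinner, norm_sub_sq_real, real_inner_comm]
    nlinarith [sq_nonneg (inner ℝ w v - r ^ 2), norm_nonneg w,
      mul_nonneg (sub_nonneg.2 (pow_le_pow_left₀ (norm_nonneg w) hw 2))
        (sub_nonneg.2 (pow_le_pow_left₀ ((norm_nonneg w).trans hw) hr 2))]
  calc √(‖v‖ ^ 2 - r ^ 2) * ‖v - w‖ = √((‖v‖ ^ 2 - r ^ 2) * ‖v - w‖ ^ 2) := by
        rw [sqrt_mul' _ (sq_nonneg _), sqrt_sq (norm_nonneg _)]
    _ ≤ √(inner ℝ (v - w) v ^ 2) := sqrt_le_sqrt hsq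
    _ = inner ℝ (v - w) v := sqrt_sq hnonneg

theorem Cconst_sq {α : ℝ} (hα : α < 1 / 2) : Cconst α ^ 2 = (1 - α) ^ 2 / (1 - 2 * α) := by
  rw [Cconst, mul_pow, sq_sqrt (by rw [one_div_nonneg]; linarith)]
  ring

theorem le_Cconst_mul_of_sq_le {α ε d : ℝ} (hα : α < 1 / 2) (hε : 0 ≤ ε)
    (h : (1 - α) ^ 2 * (d ^ 2 - ε ^ 2) ≤ α ^ 2 * d ^ 2) : d ≤ Cconst α * ε := by
  have h2α : 0 < 1 - 2 * α := by linarith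
  have hsq : d ^ 2 ≤ (Cconst α * ε) ^ 2 := by
    rw [mul_pow, Cconst_sq hα, div_mul_eq_mul_div, le_div_iff₀ h2α]
    linarith
  have hC : 0 ≤ Cconst α := mul_nonneg (by linarith) (sqrt_nonneg _)
  exact (abs_le_of_sq_le_sq hsq (mul_nonneg hC hε)).trans' (le_abs_self d)

theorem IsGeomMedian.norm_sub_le_Cconst_mul {k : ℕ} (hk : 0 < k) {θ : Fin k → H} {m : H}
    (hm : IsGeomMedian θ m) (z : H) {α ε : ℝ} (hα : α < 1 / 2)
    (hfar : (#{j | ε < ‖θ j - z‖} : ℝ) ≤ α * k) : ‖m - z‖ ≤ Cconst α * ε := by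
  set S : Finset (Fin k) := {j | ‖θ j - z‖ ≤ ε}
  have hSc : Sᶜ = ({j | ε < ‖θ j - z‖} : Finset (Fin k)) := by ext; simp [S]
  have hcard : (#S : ℝ) + #Sᶜ = k := by exact_mod_cast S.card_add_card_compl.trans (by simp)
  rw [← hSc] at hfar
  have hS : (1 - α) * k ≤ #S := by linarith
  obtain ⟨j₀, hj₀⟩ : S.Nonempty := by
    rw [← card_pos, ← Nat.cast_pos (α := ℝ)]
    nlinarith [(Nat.cast_pos (α := ℝ)).2 hk]
  have hε : 0 ≤ ε := (norm_nonneg _).trans (by simpa [S] using hj₀)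
  set d := ‖m - z‖
  refine le_Cconst_mul_of_sq_le hα hε ?_
  rcases le_or_gt d ε with hdε | hεd
  · have hd2 : d ^ 2 ≤ ε ^ 2 := pow_le_pow_left₀ (norm_nonneg _) hdε 2
    nlinarith [mul_nonneg (sq_nonneg (1 - α)) (sub_nonneg.2 hd2), sq_nonneg (α * d)]
  have hgood : ∀ j ∈ S, ‖θ j - z‖ ≤ ε := fun j hj => by simpa [S] using hj
  have hdecomp : ∀ j, m - θ j = (m - z) - (θ j - z) := fun j => by abel
  have hne : ∀ j ∈ S, m - θ j ≠ 0 := by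
    intro j hj h
    have := norm_sub_norm_le (m - z) (θ j - z)
    rw [← hdecomp, h, norm_zero] at this
    linarith [hgood j hj]
  have hcos : ∀ j ∈ S, √(d ^ 2 - ε ^ 2) ≤ inner ℝ (m - θ j) (m - z) / ‖m - θ j‖ := by
    intro j hj
    rw [le_div_iff₀ (norm_pos_iff.2 (hne j hj)), hdecomp]
    exact sqrt_sq_sub_sq_mul_norm_sub_le_inner (hgood j hj) hεd.le
  have hsum : #S * √(d ^ 2 - ε ^ 2) ≤ #Sᶜ * d := by
    calc #S * √(d ^ 2 - ε ^ 2) = ∑ _j ∈ S, √(d ^ 2 - ε ^ 2) := by rw [sum_const, nsmul_eq_mul]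
      _ ≤ ∑ j ∈ S, inner ℝ (m - θ j) (m - z) / ‖m - θ j‖ := sum_le_sum hcos
      _ ≤ #Sᶜ * d := hm.sum_inner_div_norm_le (m - z) S hne
  have hk' : (0 : ℝ) < k := Nat.cast_pos.2 hk
  have hroot : (1 - α) * √(d ^ 2 - ε ^ 2) ≤ α * d := by
    have := mul_le_mul_of_nonneg_right hS (sqrt_nonneg (d ^ 2 - ε ^ 2))
    have := mul_le_mul_of_nonneg_right hfar (norm_nonneg (m - z))
    nlinarith
  have := pow_le_pow_left₀ (mul_nonneg (by linarith) (sqrt_nonneg _)) hroot 2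
  rwa [mul_pow, sq_sqrt (by nlinarith), mul_pow] at this

theorem IsGeomMedian.norm_sub_le_Cconst_mul_of_card_filter_lt {k : ℕ} {θ : Fin k → H} {m : H}
    (hm : IsGeomMedian θ m) (z : H) (J : Finset (Fin k)) {α γ ε : ℝ} (hα : α < 1 / 2)
    (hγ : γ < 1) (hJ : (1 - γ) * k ≤ #J)
    (hlt : (#{j ∈ J | ε < ‖θ j - z‖} : ℝ) < (α - γ) / (1 - γ) * #J) :
    ‖m - z‖ ≤ Cconst α * ε := by
  have hJpos : 0 < #J := by
    by_contra! h
    simp only [Nat.le_zero.1 h, Nat.cast_zero, mul_zero] at hlt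
    exact (Nat.cast_nonneg _).not_gt hlt
  have hk : 0 < k := (card_le_univ J).trans_lt' hJpos |>.trans_eq (Fintype.card_fin k)
  refine hm.norm_sub_le_Cconst_mul hk z hα ?_
  have hsub : ({j | ε < ‖θ j - z‖} : Finset (Fin k)) ⊆ {j ∈ J | ε < ‖θ j - z‖} ∪ Jᶜ := by
    intro j
    by_cases hj : j ∈ J <;> simp [hj]
  have hsplit : (#{j | ε < ‖θ j - z‖} : ℝ) ≤ #{j ∈ J | ε < ‖θ j - z‖} + (k - #J) := by
    have hJc : (#Jᶜ : ℝ) = k - #J := by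
      rw [card_compl, Fintype.card_fin, Nat.cast_sub (card_le_univ J |>.trans_eq (by simp))]
    rw [← hJc]
    exact_mod_cast (card_le_card hsub).trans (card_union_le _ _)
  have h1a : (1 - (α - γ) / (1 - γ)) * (1 - γ) = 1 - α := by
    rw [sub_mul, div_mul_cancel₀ _ (sub_pos.2 hγ).ne']
    ring
  nlinarith

end GeometricMedian

theorem psi_nonneg {a β : ℝ} (ha : 0 < a) (ha1 : a < 1) (hβ : 0 < β) (hβ1 : β < 1) :
    0 ≤ psi a β := by
  have h₁ := one_sub_inv_le_log_of_pos (div_pos (sub_pos.2 ha1) (sub_pos.2 hβ1))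
  have h₂ := one_sub_inv_le_log_of_pos (div_pos ha hβ)
  rw [inv_div] at h₁ h₂
  have : 1 - a ≠ 0 := (sub_pos.2 ha1).ne'
  have e₁ : (1 - a) * (1 - (1 - β) / (1 - a)) = β - a := by field_simp; ring
  have e₂ : a * (1 - β / a) = a - β := by field_simp
  rw [psi]
  nlinarith [mul_le_mul_of_nonneg_left h₁ (sub_pos.2 ha1).le, mul_le_mul_of_nonneg_left h₂ ha.le]

/-- The exponential tilt `t = log (a / β) - log ((1 - a) / (1 - β))` optimises the Chernoff bound
for a Bernoulli(`β`) variable at level `a`. -/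
theorem exp_neg_mul_mul_one_add_eq_exp_neg_psi {a β : ℝ} (ha : 0 < a) (ha1 : a < 1) (hβ : 0 < β)
    (hβ1 : β < 1) :
    exp (-(log (a / β) - log ((1 - a) / (1 - β))) * a) *
        (1 + (exp (log (a / β) - log ((1 - a) / (1 - β))) - 1) * β) = exp (-psi a β) := by
  have hp : 0 < (1 - a) / (1 - β) := div_pos (sub_pos.2 ha1) (sub_pos.2 hβ1)
  have hq : 0 < a / β := div_pos ha hβ
  have : 1 - a ≠ 0 := (sub_pos.2 ha1).ne'
  have hmgf : 1 + (exp (log (a / β) - log ((1 - a) / (1 - β))) - 1) * β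
      = exp (-log ((1 - a) / (1 - β))) := by
    rw [exp_sub, exp_log hp, exp_log hq, exp_neg, exp_log hp]
    field_simp
    ring
  rw [hmgf, ← exp_add, psi]
  congr 1
  ring

theorem exp_mul_indicator_one {Ω : Type*} (s : Set Ω) (t : ℝ) (ω : Ω) :
    exp (t * s.indicator 1 ω) = s.indicator (fun _ => exp t - 1) ω + 1 := by
  by_cases hω : ω ∈ s <;> simp [hω]

section Chernoff

variable {Ω : Type*} [MeasurableSpace Ω] {P : Measure Ω} [IsProbabilityMeasure P]

theorem mgf_indicator_one {s : Set Ω} (hs : MeasurableSet s) (t : ℝ) :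
    mgf (s.indicator 1) P t = 1 + (exp t - 1) * P.real s := by
  simp_rw [mgf, exp_mul_indicator_one]
  rw [integral_add ((integrable_const _).indicator hs) (integrable_const 1),
    integral_indicator_const _ hs]
  simp [add_comm, mul_comm]

variable {E ι : Type*} [MeasurableSpace E]

open Classical in
theorem measureReal_card_filter_mem_ge_le_exp_mul {Y : ι → Ω → E} (hY : ∀ j, Measurable (Y j))
    (hind : iIndepFun Y P) {B : Set E} (hB : MeasurableSet B) (J : Finset ι) {β : ℝ}
    (hP : ∀ j ∈ J, P.real (Y j ⁻¹' B) ≤ β) {t : ℝ} (ht : 0 ≤ t) (x : ℝ) :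
    P.real {ω | x ≤ #{j ∈ J | Y j ω ∈ B}} ≤ exp (-t * x) * (1 + (exp t - 1) * β) ^ #J := by
  set X : ι → Ω → ℝ := fun j => (Y j ⁻¹' B).indicator 1
  have hBind : Measurable (B.indicator (1 : E → ℝ)) := measurable_one.indicator hB
  have hXmeas : ∀ j, Measurable (X j) := fun j => hBind.comp (hY j)
  have hXind : iIndepFun X P := hind.comp (fun _ => B.indicator (1 : E → ℝ)) fun _ => hBind
  have hXint : ∀ j ∈ J, Integrable (fun ω => exp (t * X j ω)) P := fun j _ => by
    simp_rw [X, exp_mul_indicator_one]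
    exact ((integrable_const _).indicator (measurableSet_preimage (hY j) hB)).add
      (integrable_const 1)
  have hcount : ∀ ω, (#{j ∈ J | Y j ω ∈ B} : ℝ) = (∑ j ∈ J, X j) ω := fun ω => by
    simp [X, Finset.sum_apply, Set.indicator_apply]
  simp_rw [hcount]
  calc P.real {ω | x ≤ (∑ j ∈ J, X j) ω}
      ≤ exp (-t * x) * mgf (∑ j ∈ J, X j) P t :=
        measure_ge_le_exp_mul_mgf x ht (hXind.integrable_exp_mul_sum hXmeas hXint)
    _ = exp (-t * x) * ∏ j ∈ J, (1 + (exp t - 1) * P.real (Y j ⁻¹' B)) := by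
        rw [hXind.mgf_sum hXmeas]
        simp only [X, mgf_indicator_one (measurableSet_preimage (hY _) hB)]
    _ ≤ exp (-t * x) * (1 + (exp t - 1) * β) ^ #J := by
        have het : 0 ≤ exp t - 1 := by linarith [one_le_exp ht]
        gcongr
        refine (prod_le_prod (fun j _ => ?_) fun j hj => ?_).trans_eq (prod_const _)
        · positivity
        · gcongr
          exact hP j hj

open Classical in
theorem measureReal_card_filter_mem_ge_le_exp_neg_psi {Y : ι → Ω → E} (hY : ∀ j, Measurable (Y j))
    (hind : iIndepFun Y P) {B : Set E} (hB : MeasurableSet B) (J : Finset ι) {a β : ℝ}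
    (hβ : 0 < β) (hβa : β ≤ a) (ha1 : a < 1) (hP : ∀ j ∈ J, P.real (Y j ⁻¹' B) ≤ β) :
    P.real {ω | a * #J ≤ #{j ∈ J | Y j ω ∈ B}} ≤ exp (-(#J * psi a β)) := by
  have ha : 0 < a := hβ.trans_le hβa
  have hβ1 : β < 1 := hβa.trans_lt ha1
  have ht : 0 ≤ log (a / β) - log ((1 - a) / (1 - β)) := by
    have h₁ : 0 ≤ log (a / β) := log_nonneg ((one_le_div hβ).2 hβa)
    have h₂ : log ((1 - a) / (1 - β)) ≤ 0 :=
      log_nonpos (div_pos (sub_pos.2 ha1) (sub_pos.2 hβ1)).le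
        ((div_le_one (sub_pos.2 hβ1)).2 (by linarith))
    linarith
  refine (measureReal_card_filter_mem_ge_le_exp_mul hY hind hB J hP ht _).trans_eq ?_
  set t := log (a / β) - log ((1 - a) / (1 - β))
  calc exp (-t * (a * #J)) * (1 + (exp t - 1) * β) ^ #J
      = (exp (-t * a) * (1 + (exp t - 1) * β)) ^ #J := by rw [mul_pow, ← exp_nat_mul]; ring_nf
    _ = exp (-(#J * psi a β)) := by
      rw [exp_neg_mul_mul_one_add_eq_exp_neg_psi ha ha1 hβ hβ1, ← exp_nat_mul]; ring_nf

theorem ofReal_one_sub_le_measure_compl {s : Set Ω} {x : ℝ} (h : P.real s ≤ x) :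
    ENNReal.ofReal (1 - x) ≤ P sᶜ := by
  have hx : 0 ≤ x := measureReal_nonneg.trans h
  have hcover : 1 ≤ P sᶜ + P s := by
    simpa [measure_univ] using measure_union_le (μ := P) sᶜ s
  calc ENNReal.ofReal (1 - x) = 1 - ENNReal.ofReal x := by
        rw [ENNReal.ofReal_sub 1 hx, ENNReal.ofReal_one]
    _ ≤ 1 - P s := by gcongr; exact (ENNReal.le_ofReal_iff_toReal_le (measure_ne_top P s) hx).2 h
    _ ≤ P sᶜ := tsub_le_iff_right.2 hcover

end Chernoff

theorem lt_one_of_lt_sub_div_one_sub {α β γ : ℝ} (hβα : β < α) (hα : α < 1)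
    (hγ : γ < (α - β) / (1 - β)) : γ < 1 :=
  hγ.trans ((div_lt_one (by linarith)).2 (by linarith))

theorem sub_div_one_sub_mem_Ioo {α β γ : ℝ} (hβα : β < α) (hα : α < 1)
    (hγ : γ < (α - β) / (1 - β)) : (α - γ) / (1 - γ) ∈ Set.Ioo β 1 := by
  have h1γ : 0 < 1 - γ := sub_pos.2 (lt_one_of_lt_sub_div_one_sub hβα hα hγ)
  refine ⟨?_, (div_lt_one h1γ).2 (by linarith)⟩
  rw [lt_div_iff₀ h1γ]
  nlinarith [(lt_div_iff₀ (by linarith : 0 < 1 - β)).1 hγ]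

theorem drl_robust_general {Ω H : Type*} [MeasurableSpace Ω]
    [NormedAddCommGroup H] [InnerProductSpace ℝ H]
    [MeasurableSpace H] [BorelSpace H]
    (P : Measure Ω) [IsProbabilityMeasure P]
    {k : ℕ} (θhat : Fin k → Ω → H) (θstar : H) (ε : ℝ)
    (α βs : ℝ) (hα : α ∈ Set.Ioo (0 : ℝ) (1 / 2)) (hβs : βs ∈ Set.Ioo (0 : ℝ) α)
    (γ : ℝ) (hγ : γ < (α - βs) / (1 - βs))
    (hmeas : ∀ j, Measurable (θhat j))
    (hindep : iIndepFun θhat P)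
    (J : Finset (Fin k)) (hJcard : (1 - γ) * k ≤ J.card)
    (hdev : ∀ j ∈ J, P {ω | ε < ‖θhat j ω - θstar‖} ≤ ENNReal.ofReal βs)
    (θtilde : Ω → H)
    (hmed : ∀ ω, IsGeomMedian (fun j => θhat j ω) (θtilde ω)) :
    ENNReal.ofReal (1 - Real.exp (-(k * (1 - γ) * psi ((α - γ) / (1 - γ)) βs)))
      ≤ P {ω | ‖θtilde ω - θstar‖ ≤ Cconst α * ε} := by
  classical
  obtain ⟨hβ0, hβα⟩ := hβs
  have hα1 : α < 1 := by linarith [hα.2]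
  have hγ1 := lt_one_of_lt_sub_div_one_sub hβα hα1 hγ
  set a := (α - γ) / (1 - γ)
  obtain ⟨hβa, ha1⟩ : a ∈ Set.Ioo βs 1 := sub_div_one_sub_mem_Ioo hβα hα1 hγ
  set B : Set H := {x | ε < ‖x - θstar‖}
  have hB : MeasurableSet B := measurableSet_lt measurable_const (by fun_prop)
  have htail : P.real {ω | a * #J ≤ #{j ∈ J | θhat j ω ∈ B}}
      ≤ exp (-(k * (1 - γ) * psi a βs)) := by
    refine (measureReal_card_filter_mem_ge_le_exp_neg_psi hmeas hindep hB J hβ0 hβa.le ha1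
      fun j hj => ENNReal.toReal_le_of_le_ofReal hβ0.le (hdev j hj)).trans (exp_le_exp.2 ?_)
    have := psi_nonneg (hβ0.trans hβa) ha1 hβ0 (hβa.trans ha1)
    nlinarith
  have hgood : {ω | a * #J ≤ #{j ∈ J | θhat j ω ∈ B}}ᶜ
      ⊆ {ω | ‖θtilde ω - θstar‖ ≤ Cconst α * ε} := fun ω hω =>
    (hmed ω).norm_sub_le_Cconst_mul_of_card_filter_lt θstar J hα.2 hγ1 hJcard
      (by simpa [B, a] using hω)
  calc ENNReal.ofReal (1 - exp (-(k * (1 - γ) * psi a βs)))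
      ≤ P {ω | a * #J ≤ #{j ∈ J | θhat j ω ∈ B}}ᶜ := ofReal_one_sub_le_measure_compl htail
    _ ≤ P {ω | ‖θtilde ω - θstar‖ ≤ Cconst α * ε} := measure_mono hgood

/-- **Robustness property of DRL.** If the independent estimates `θ̂ j`, for `j` in a subset `J`
of at least `(1 - γ) k` machines, each deviate from `θ*` by more than `ε` with probability at
most `β* < α` (the remaining machines being arbitrary), then the geometric median `θ̃` of all
the estimates satisfies `‖θ̃ - θ*‖ ≤ C_α ε` with probability at least
`1 - exp(-k (1 - γ) ψ((α - γ)/(1 - γ), β*))`. -/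
theorem drl_robust {Ω H : Type*} [MeasurableSpace Ω]
    [NormedAddCommGroup H] [InnerProductSpace ℝ H] [CompleteSpace H]
    [MeasurableSpace H] [BorelSpace H]
    (P : Measure Ω) [IsProbabilityMeasure P]
    {k : ℕ} (θhat : Fin k → Ω → H) (θstar : H) (ε : ℝ) (hε : 0 ≤ ε)
    (α βs : ℝ) (hα : α ∈ Set.Ioo (0 : ℝ) (1 / 2)) (hβs : βs ∈ Set.Ioo (0 : ℝ) α)
    (γ : ℝ) (hγ0 : 0 ≤ γ) (hγ : γ < (α - βs) / (1 - βs))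
    (hmeas : ∀ j, Measurable (θhat j))
    (hindep : iIndepFun θhat P)
    (J : Finset (Fin k)) (hJcard : (1 - γ) * k ≤ J.card)
    (hdev : ∀ j ∈ J, P {ω | ε < ‖θhat j ω - θstar‖} ≤ ENNReal.ofReal βs)
    (θtilde : Ω → H)
    (hmed : ∀ ω, IsGeomMedian (fun j => θhat j ω) (θtilde ω)) :
    ENNReal.ofReal (1 - Real.exp (-(k * (1 - γ) * psi ((α - γ) / (1 - γ)) βs)))
      ≤ P {ω | ‖θtilde ω - θstar‖ ≤ Cconst α * ε} :=
  drl_robust_general P θhat θstar ε α βs hα hβs γ hγ hmeas hindep J hJcard hdev θtilde hmed
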